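/- Let X be an irreducible birth-and-death chain on ⟦b,a⟧ (b ≤ 0 < a) with invariant measure π, and set C := max( E[T_{a→0}] / E[T_{0→a}] , E[T_{b→0}] / E[T_{0→b}] ). If C ≤ 1, then ( (1 − 2C) / 2 ) · min( E[T_{0→a}] , E[T_{0→b}] ) ≤ E[T_{0→{a,b}}] ≤ min( E[T_{0→a}] , E[T_{0→b}] ), where T_{0→{a,b}} := min( T_{0→a}, T_{0→b} ). -/

import Mathlib

open MeasureTheory Filter Topology ENNReal ProbabilityTheory

noncomputable section

/-- First time `t ≥ 0` at which the path `ω` visits the set `A`,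
with value `⊤` if the path never visits `A`. -/
def hitTime {S : Type*} (A : Set S) (ω : ℕ → S) : ℝ≥0∞ :=
  ⨅ (t : ℕ) (_ : ω t ∈ A), (t : ℝ≥0∞)

/-- First time `t > 0` at which the path `ω` visits the set `A`. -/
def hitTimePos {S : Type*} (A : Set S) (ω : ℕ → S) : ℝ≥0∞ :=
  ⨅ (t : ℕ) (_ : 0 < t) (_ : ω t ∈ A), (t : ℝ≥0∞)

/-- First time `t ≥ r` at which the path `ω` visits the set `A`. -/
def hitTimeAfter {S : Type*} (A : Set S) (r : ℝ≥0∞) (ω : ℕ → S) : ℝ≥0∞ :=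
  ⨅ (t : ℕ) (_ : r ≤ (t : ℝ≥0∞)) (_ : ω t ∈ A), (t : ℝ≥0∞)

/-- One-step transition probabilities of a birth-and-death chain on `ℤ` with
birth rates `p` and death rates `q` (and holding probability `1 - p x - q x`). -/
def bdStep (p q : ℤ → ℝ) (x y : ℤ) : ℝ :=
  if y = x + 1 then p x else if y = x - 1 then q x
  else if y = x then 1 - p x - q x else 0

/-- An irreducible discrete-time birth-and-death chain on the integer interval
`⟦b,a⟧`, given by its transition probabilities `p x = p(x,x+1) > 0` (for `b ≤ x ≤ a-1`),
`q x = p(x,x-1) > 0` (for `b+1 ≤ x ≤ a`), and by the laws `law x` of the chain started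
at `x` on path space `ℕ → ℤ` (characterized by the cylinder/Markov property `markov`). -/
structure BDChain (b a : ℤ) where
  p : ℤ → ℝ
  q : ℤ → ℝ
  law : ℤ → Measure (ℕ → ℤ)
  prob : ∀ x, IsProbabilityMeasure (law x)
  p_pos : ∀ x, b ≤ x → x ≤ a - 1 → 0 < p x
  q_pos : ∀ x, b + 1 ≤ x → x ≤ a → 0 < q x
  p_zero : ∀ x, x < b ∨ a ≤ x → p x = 0
  q_zero : ∀ x, x ≤ b ∨ a < x → q x = 0
  r_nonneg : ∀ x, b ≤ x → x ≤ a → p x + q x ≤ 1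
  init : ∀ x, law x {ω | ω 0 = x} = 1
  markov : ∀ (x : ℤ) (u : ℕ → ℤ) (n : ℕ),
    law x {ω | ∀ i ≤ n + 1, ω i = u i}
      = law x {ω | ∀ i ≤ n, ω i = u i} * ENNReal.ofReal (bdStep p q (u n) (u (n + 1)))

/-- Mean hitting time `E[T_{x → y}]` for the birth-and-death chain `c`. -/
def BDChain.eT {b a : ℤ} (c : BDChain b a) (x y : ℤ) : ℝ≥0∞ :=
  ∫⁻ ω, hitTime {y} ω ∂(c.law x)

/-- Mean hitting time `E[T_{x → A}]` of a set `A` for the birth-and-death chain `c`. -/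
def BDChain.eTset {b a : ℤ} (c : BDChain b a) (x : ℤ) (A : Set ℤ) : ℝ≥0∞ :=
  ∫⁻ ω, hitTime A ω ∂(c.law x)

/-- Second moment `E[T_{x → y}²]` of the hitting time. -/
def BDChain.eT2 {b a : ℤ} (c : BDChain b a) (x y : ℤ) : ℝ≥0∞ :=
  ∫⁻ ω, (hitTime {y} ω) ^ 2 ∂(c.law x)

/-- `π` is the (unique) reversible invariant probability measure of the
birth-and-death chain `c` on `⟦b,a⟧`: it is positive on `⟦b,a⟧`, vanishes outside,
has total mass one, and satisfies the reversibility (detailed balance) relation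
`π(x) q_x = π(x-1) p_{x-1}`. -/
def BDChain.IsStationary {b a : ℤ} (c : BDChain b a) (π : ℤ → ℝ) : Prop :=
  (∀ x, b ≤ x → x ≤ a → 0 < π x) ∧ (∀ x, x < b ∨ a < x → π x = 0) ∧
  (∑ x ∈ Finset.Icc b a, π x) = 1 ∧
  (∀ x, b + 1 ≤ x → x ≤ a → π x * c.q x = π (x - 1) * c.p (x - 1))

/-!
Let `T = T_{0→{a,b}}` and `pₐ = ℙ(X_T = a)`, `p_b = ℙ(X_T = b)`. Restarting the chain at time `T`
(strong Markov property) and using the triangle inequality for mean hitting times,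
`E[T_{0→a}] ≤ E[T] + p_b (E[T_{b→0}] + E[T_{0→a}])` and symmetrically for `b`. Since
`pₐ + p_b = 1` and `E[T_{b→0}] ≤ C E[T_{0→b}]`, `E[T_{a→0}] ≤ C E[T_{0→a}]`, adding the two gives
`(1 - C) (pₐ E[T_{0→a}] + p_b E[T_{0→b}]) ≤ 2 E[T]`, and the convex combination dominates the
minimum. Everything is finite because from every site of `⟦b,a⟧` the chain walks straight to any
other one within `a - b` steps with probability bounded below, so hitting times have geometric
tails. The upper bound is the monotonicity of hitting times in the target set.
-/

section Paths

variable {S : Type*} {A B : Set S} {ω : ℕ → S}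

def firstEntry (A : Set S) (n : ℕ) (z : S) : Set (ℕ → S) :=
  {ω | ω n = z ∧ ω n ∈ A ∧ ∀ i < n, ω i ∉ A}

def neverHits (A : Set S) : Set (ℕ → S) := {ω | ∀ t, ω t ∉ A}

theorem mem_neverHits_or_exists_mem_firstEntry (A : Set S) (ω : ℕ → S) :
    ω ∈ neverHits A ∨ ∃ n, ω ∈ firstEntry A n (ω n) := by
  classical
  by_cases h : ∃ t, ω t ∈ A
  · exact .inr ⟨Nat.find h, rfl, Nat.find_spec h, fun i => Nat.find_min h⟩
  · exact .inl (not_exists.mp h)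

theorem hitTime_le_of_mem {t : ℕ} (h : ω t ∈ A) : hitTime A ω ≤ t :=
  iInf₂_le t h

theorem hitTime_eq_of_mem_firstEntry {n : ℕ} {z : S} (h : ω ∈ firstEntry A n z) :
    hitTime A ω = n := by
  refine (hitTime_le_of_mem h.2.1).antisymm (le_iInf₂ fun t ht => ?_)
  exact_mod_cast Nat.le_of_not_lt fun hlt => h.2.2 t hlt ht

theorem hitTime_eq_top (h : ω ∈ neverHits A) : hitTime A ω = ⊤ := by
  simp_all [hitTime, neverHits]

theorem hitTime_anti (h : A ⊆ B) (ω : ℕ → S) : hitTime B ω ≤ hitTime A ω :=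
  le_iInf₂ fun _ ht => hitTime_le_of_mem (h ht)

def shiftPath (n : ℕ) (ω : ℕ → S) : ℕ → S := fun t => ω (n + t)

theorem hitTime_le_add_hitTime_shiftPath (A : Set S) (n : ℕ) (ω : ℕ → S) :
    hitTime A ω ≤ n + hitTime A (shiftPath n ω) := by
  rcases mem_neverHits_or_exists_mem_firstEntry A (shiftPath n ω) with h | ⟨m, hm⟩
  · simp [hitTime_eq_top h]
  · rw [hitTime_eq_of_mem_firstEntry hm, ← Nat.cast_add]
    exact hitTime_le_of_mem hm.2.1

variable [MeasurableSpace S]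

theorem measurable_shiftPath (n : ℕ) : Measurable (shiftPath (S := S) n) :=
  measurable_pi_lambda _ fun t => measurable_pi_apply (n + t)

theorem measurable_hitTime (hA : MeasurableSet A) : Measurable (hitTime A) := by
  classical
  have : hitTime A = fun ω => ⨅ t : ℕ, if ω t ∈ A then (t : ℝ≥0∞) else ⊤ := by
    funext ω
    refine iInf_congr fun t => ?_
    by_cases h : ω t ∈ A <;> simp [h]
  rw [this]
  exact Measurable.iInf fun t =>
    Measurable.ite (measurable_pi_apply t hA) measurable_const measurable_const

end Paths

section Cylinders

def prefixCylinder {S : Type*} (u : ℕ → S) (n : ℕ) : Set (ℕ → S) := {ω | ∀ i ≤ n, ω i = u i}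

def IsDeterminedUpTo {S : Type*} (n : ℕ) (E : Set (ℕ → S)) : Prop :=
  ∀ ω ω', (∀ i ≤ n, ω i = ω' i) → (ω ∈ E ↔ ω' ∈ E)

theorem isPiSystem_prefixCylinders {S : Type*} :
    IsPiSystem {s : Set (ℕ → S) | ∃ u n, s = prefixCylinder u n} := by
  rintro _ ⟨u, n, rfl⟩ _ ⟨v, m, rfl⟩ ⟨ω, hωu, hωv⟩
  wlog h : n ≤ m generalizing u v n m
  · rw [Set.inter_comm]; exact this v m u n hωv hωu (by omega)
  refine ⟨v, m, Set.inter_eq_right.mpr fun ω' hω' i hi => ?_⟩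
  rw [hω' i (hi.trans h), ← hωv i (hi.trans h), hωu i hi]

theorem measurableSet_eval_eq (i : ℕ) (z : ℤ) : MeasurableSet {ω : ℕ → ℤ | ω i = z} :=
  measurableSet_eq_fun (measurable_pi_apply i) measurable_const

theorem measurableSet_prefixCylinder (u : ℕ → ℤ) (n : ℕ) :
    MeasurableSet (prefixCylinder u n) := by
  simp only [prefixCylinder, Set.ofPred_forall]
  exact .iInter fun i => .iInter fun _ => measurableSet_eval_eq i (u i)

def prefixRepresentatives (n : ℕ) (E : Set (ℕ → ℤ)) : Set (ℕ → ℤ) :=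
  {v | v ∈ E ∧ ∀ j, n < j → v j = 0}

theorem countable_prefixRepresentatives (n : ℕ) (E : Set (ℕ → ℤ)) :
    (prefixRepresentatives n E).Countable := by
  refine (Set.mapsTo_univ (fun v (i : Fin (n + 1)) => v i) _).countable_of_injOn ?_
    Set.countable_univ
  intro v hv w hw hvw
  funext j
  rcases le_or_gt j n with hj | hj
  · exact congrFun hvw ⟨j, Nat.lt_succ_of_le hj⟩
  · rw [hv.2 j hj, hw.2 j hj]

theorem pairwiseDisjoint_prefixRepresentatives (n : ℕ) (E : Set (ℕ → ℤ)) :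
    (prefixRepresentatives n E).PairwiseDisjoint (prefixCylinder · n) := by
  intro v hv w hw hvw
  refine Set.disjoint_left.mpr fun ω hωv hωw => hvw (funext fun j => ?_)
  rcases le_or_gt j n with hj | hj
  · rw [← hωv j hj, hωw j hj]
  · rw [hv.2 j hj, hw.2 j hj]

theorem IsDeterminedUpTo.eq_biUnion {n : ℕ} {E : Set (ℕ → ℤ)} (hE : IsDeterminedUpTo n E) :
    E = ⋃ v ∈ prefixRepresentatives n E, prefixCylinder v n := by
  ext ω
  simp only [Set.mem_iUnion, prefixRepresentatives, Set.mem_ofPred_eq, exists_prop]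
  constructor
  · intro hω
    have hagree : ∀ i ≤ n, ω i = if i ≤ n then ω i else 0 := fun i hi => by simp [hi]
    refine ⟨fun j => if j ≤ n then ω j else 0, ⟨(hE _ _ hagree).mp hω, fun j hj => ?_⟩, hagree⟩
    simp [Nat.not_le.mpr hj]
  · rintro ⟨v, ⟨hvE, -⟩, hωv⟩
    exact (hE ω v hωv).mpr hvE

theorem IsDeterminedUpTo.measurableSet {n : ℕ} {E : Set (ℕ → ℤ)} (hE : IsDeterminedUpTo n E) :
    MeasurableSet[MeasurableSpace.generateFrom {s | ∃ u n, s = prefixCylinder u n}] E := by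
  rw [hE.eq_biUnion]
  exact .biUnion (countable_prefixRepresentatives n E) fun v _ =>
    MeasurableSpace.measurableSet_generateFrom ⟨v, n, rfl⟩

theorem generateFrom_prefixCylinders :
    MeasurableSpace.generateFrom {s : Set (ℕ → ℤ) | ∃ u n, s = prefixCylinder u n} =
      MeasurableSpace.pi := by
  refine le_antisymm (MeasurableSpace.generateFrom_le ?_) (iSup_le fun i => ?_)
  · rintro _ ⟨u, n, rfl⟩
    exact measurableSet_prefixCylinder u n
  · rintro _ ⟨s, -, rfl⟩
    refine IsDeterminedUpTo.measurableSet (n := i) fun ω ω' h => ?_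
    simp [h i le_rfl]

end Cylinders

section FirstEntry

variable {S : Type*}

theorem isDeterminedUpTo_firstEntry (A : Set S) (n : ℕ) (z : S) :
    IsDeterminedUpTo n (firstEntry A n z) := by
  intro ω ω' h
  simp only [firstEntry, Set.mem_ofPred_eq, h n le_rfl]
  exact and_congr_right' (and_congr_right' (forall₂_congr fun i hi => by rw [h i hi.le]))

theorem pairwise_disjoint_firstEntry (A : Set S) :
    Pairwise (Function.onFun Disjoint fun p : ℕ × S => firstEntry A p.1 p.2) := by
  rintro ⟨n, z⟩ ⟨m, w⟩ hne
  refine Set.disjoint_left.mpr fun ω ⟨hz, hn, hbefore⟩ ⟨hw, hm, hbefore'⟩ => ?_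
  rcases lt_trichotomy n m with h | rfl | h
  · exact hbefore' n h hn
  · exact hne (Prod.ext rfl (hz.symm.trans hw))
  · exact hbefore m h hm

theorem iUnion_firstEntry (A : Set S) :
    ⋃ p : ℕ × S, firstEntry A p.1 p.2 = (neverHits A)ᶜ := by
  ext ω
  simp only [Set.mem_iUnion, Set.mem_compl_iff, neverHits, Set.mem_ofPred_eq, not_forall,
    not_not]
  constructor
  · rintro ⟨p, -, hp, -⟩
    exact ⟨p.1, hp⟩
  · rintro ⟨t, ht⟩
    rcases mem_neverHits_or_exists_mem_firstEntry A ω with h | ⟨n, hn⟩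
    · exact absurd ht (h t)
    · exact ⟨(n, ω n), hn⟩

theorem measurableSet_firstEntry (A : Set ℤ) (n : ℕ) (z : ℤ) :
    MeasurableSet (firstEntry A n z) := by
  simp only [firstEntry, Set.ofPred_and, Set.ofPred_forall]
  exact (measurableSet_eval_eq n z).inter
    ((measurable_pi_apply n MeasurableSet.of_discrete).inter
      (.iInter fun i => .iInter fun _ => (measurable_pi_apply i MeasurableSet.of_discrete).compl))

theorem measurableSet_neverHits (A : Set ℤ) : MeasurableSet (neverHits A) := by
  simp only [neverHits, Set.ofPred_forall]
  exact .iInter fun t => (measurable_pi_apply t MeasurableSet.of_discrete).compl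

theorem lintegral_eq_tsum_firstEntry_add (ν : Measure (ℕ → ℤ)) (A : Set ℤ)
    (f : (ℕ → ℤ) → ℝ≥0∞) :
    ∫⁻ ω, f ω ∂ν
      = ∑' p : ℕ × ℤ, ∫⁻ ω in firstEntry A p.1 p.2, f ω ∂ν + ∫⁻ ω in neverHits A, f ω ∂ν := by
  have hmeas (p : ℕ × ℤ) : MeasurableSet (firstEntry A p.1 p.2) :=
    measurableSet_firstEntry A p.1 p.2
  rw [← lintegral_add_compl f (MeasurableSet.iUnion hmeas), iUnion_firstEntry, compl_compl,
    ← iUnion_firstEntry, Measure.restrict_iUnion (pairwise_disjoint_firstEntry A) hmeas,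
    lintegral_sum_measure]

end FirstEntry

section TailSum

variable {S : Type*}

def avoidsUpTo (A : Set S) (m : ℕ) : Set (ℕ → S) := {ω | ∀ t ≤ m, ω t ∉ A}

theorem avoidsUpTo_anti (A : Set S) {m m' : ℕ} (h : m ≤ m') :
    avoidsUpTo A m' ⊆ avoidsUpTo A m :=
  fun _ hω t ht => hω t (ht.trans h)

theorem hitTime_eq_tsum_indicator (A : Set S) (ω : ℕ → S) :
    hitTime A ω = ∑' j, (avoidsUpTo A j).indicator 1 ω := by
  rcases mem_neverHits_or_exists_mem_firstEntry A ω with h | ⟨n, hn⟩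
  · simp_all [hitTime_eq_top h, avoidsUpTo, neverHits]
  · have hind j : (avoidsUpTo A j).indicator 1 ω = if j < n then (1 : ℝ≥0∞) else 0 := by
      split_ifs with hj
      · exact Set.indicator_of_mem (show ω ∈ avoidsUpTo A j from
          fun t ht => hn.2.2 t (by omega)) _
      · exact Set.indicator_of_notMem (show ω ∉ avoidsUpTo A j from
          fun h => h n (by omega) hn.2.1) _
    rw [hitTime_eq_of_mem_firstEntry hn, tsum_congr hind,
      tsum_eq_sum (s := Finset.range n) fun j hj => if_neg (by simpa using hj),
      Finset.sum_congr rfl fun j hj => if_pos (Finset.mem_range.mp hj)]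
    simp

theorem measurableSet_avoidsUpTo (A : Set ℤ) (m : ℕ) : MeasurableSet (avoidsUpTo A m) := by
  simp only [avoidsUpTo, Set.ofPred_forall]
  exact .iInter fun t => .iInter fun _ => (measurable_pi_apply t MeasurableSet.of_discrete).compl

theorem lintegral_hitTime_eq_tsum (ν : Measure (ℕ → ℤ)) (A : Set ℤ) :
    ∫⁻ ω, hitTime A ω ∂ν = ∑' j, ν (avoidsUpTo A j) := by
  simp_rw [hitTime_eq_tsum_indicator A]
  rw [lintegral_tsum fun j =>
    (measurable_one.indicator (measurableSet_avoidsUpTo A j)).aemeasurable]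
  simp [lintegral_indicator_one (measurableSet_avoidsUpTo A _)]

theorem ENNReal.tsum_pow_div (r : ℝ≥0∞) {m : ℕ} (hm : 0 < m) :
    ∑' j : ℕ, r ^ (j / m) = m * (1 - r)⁻¹ := by
  have : NeZero m := ⟨hm.ne'⟩
  have hdiv (k : ℕ) (i : Fin m) : (k * m + i) / m = k := by
    rw [Nat.add_comm, Nat.add_mul_div_right _ _ hm, Nat.div_eq_of_lt i.2, Nat.zero_add]
  rw [← (Nat.divModEquiv m).symm.tsum_eq, ENNReal.tsum_prod']
  simp [Nat.divModEquiv, hdiv, ENNReal.tsum_mul_left, ENNReal.tsum_geometric]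

end TailSum

theorem Finset.prod_range_eq_prod_Ico_int {M : Type*} [CommMonoid M] (f : ℤ → M) (z : ℤ)
    (m : ℕ) : ∏ j ∈ Finset.range m, f (z + j) = ∏ k ∈ Finset.Ico z (z + m), f k := by
  refine Finset.prod_nbij' (fun j => z + j) (fun k => (k - z).toNat) ?_ ?_ ?_ ?_ ?_ <;>
    intro x hx <;> simp at hx ⊢ <;> omega

theorem Finset.prod_range_eq_prod_Ioc_int {M : Type*} [CommMonoid M] (f : ℤ → M) (z : ℤ)
    (m : ℕ) : ∏ j ∈ Finset.range m, f (z - j) = ∏ k ∈ Finset.Ioc (z - m) z, f k := by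
  refine Finset.prod_nbij' (fun j => z - j) (fun k => (z - k).toNat) ?_ ?_ ?_ ?_ ?_ <;>
    intro x hx <;> simp at hx ⊢ <;> omega

theorem Real.one_sub_two_mul_div_two_mul_min_le {α β α' β' μ pa pb c : ℝ} (hpa : 0 ≤ pa)
    (hpb : 0 ≤ pb) (hp : pa + pb = 1) (hc : 0 ≤ c) (hc1 : c ≤ 1) (hα0 : 0 ≤ α) (hβ0 : 0 ≤ β)
    (hα' : α' ≤ c * α) (hβ' : β' ≤ c * β)
    (hα : α ≤ μ + pb * (β' + α)) (hβ : β ≤ μ + pa * (α' + β)) :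
    (1 - 2 * c) / 2 * min α β ≤ μ := by
  have hmin : min α β ≤ pa * α + pb * β := by
    have h := congrArg (· * min α β) hp
    simp only [add_mul, one_mul] at h
    nlinarith [mul_le_mul_of_nonneg_left (min_le_left α β) hpa,
      mul_le_mul_of_nonneg_left (min_le_right α β) hpb]
  -- `pa α ≤ μ + pb c β` and `pb β ≤ μ + pa c α`; add them
  have hsum : (1 - c) * (pa * α + pb * β) ≤ 2 * μ := by
    nlinarith [mul_le_mul_of_nonneg_left hα' hpa, mul_le_mul_of_nonneg_left hβ' hpb]
  nlinarith [mul_le_mul_of_nonneg_left hmin (by linarith : 0 ≤ 1 - c), le_min hα0 hβ0]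

theorem ENNReal.one_sub_two_mul_div_two_mul_min_le {α β α' β' μ pa pb C : ℝ≥0∞}
    (hα : α ≠ ⊤) (hβ : β ≠ ⊤) (hμ : μ ≠ ⊤) (hp : pa + pb = 1)
    (hαC : α' / α ≤ C) (hβC : β' / β ≤ C)
    (hα_le : α ≤ μ + pb * (β' + α)) (hβ_le : β ≤ μ + pa * (α' + β)) :
    (1 - 2 * C) / 2 * min α β ≤ μ := by
  rcases le_or_gt 1 (2 * C) with hC | hC
  · simp [tsub_eq_zero_of_le hC]
  have hC1 : C ≤ 1 := by
    calc C ≤ 2 * C := by rw [two_mul]; exact le_add_self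
      _ ≤ 1 := hC.le
  have hCtop : C ≠ ⊤ := ne_top_of_le_ne_top one_ne_top hC1
  replace hαC := (ENNReal.div_le_iff_le_mul (.inr hCtop) (.inl hα)).mp hαC
  replace hβC := (ENNReal.div_le_iff_le_mul (.inr hCtop) (.inl hβ)).mp hβC
  lift α' to NNReal using ne_top_of_le_ne_top (mul_ne_top hCtop hα) hαC
  lift β' to NNReal using ne_top_of_le_ne_top (mul_ne_top hCtop hβ) hβC
  lift α to NNReal using hα
  lift β to NNReal using hβ
  lift μ to NNReal using hμ
  lift pa to NNReal using ne_top_of_le_ne_top one_ne_top (hp ▸ le_self_add)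
  lift pb to NNReal using ne_top_of_le_ne_top one_ne_top (hp ▸ le_add_self)
  lift C to NNReal using hCtop
  norm_cast at *
  have hp' : (pa : ℝ) + pb = 1 := by exact_mod_cast hp
  have hC1' : (C : ℝ) ≤ 1 := by exact_mod_cast hC1
  rw [← NNReal.coe_le_coe] at hαC hβC hα_le hβ_le ⊢
  push_cast [NNReal.coe_sub hC.le] at hαC hβC hα_le hβ_le ⊢
  exact Real.one_sub_two_mul_div_two_mul_min_le pa.2 pb.2 hp' C.2 hC1' α.2 β.2 hαC hβC hα_le hβ_le

namespace BDChain

variable {b a : ℤ} (X : BDChain b a)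

instance (x : ℤ) : IsProbabilityMeasure (X.law x) := X.prob x

def step (z w : ℤ) : ℝ≥0∞ := ENNReal.ofReal (bdStep X.p X.q z w)

theorem ae_init (x : ℤ) : ∀ᵐ ω ∂X.law x, ω 0 = x := by
  rw [ae_iff, ← Set.compl_ofPred, prob_compl_eq_one_sub (measurableSet_eval_eq 0 x), X.init,
    tsub_self]

theorem law_prefixCylinder_zero (x : ℤ) (u : ℕ → ℤ) :
    X.law x (prefixCylinder u 0) = if u 0 = x then 1 else 0 := by
  have h0 : prefixCylinder u 0 = {ω | ω 0 = u 0} := by simp [prefixCylinder]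
  split_ifs with hu
  · rw [h0, hu, X.init]
  · refine measure_mono_null (fun ω hω => ?_) (ae_iff.mp (X.ae_init x))
    rw [h0] at hω
    exact fun h => hu (hω.symm.trans h)

theorem law_prefixCylinder_succ (x : ℤ) (u : ℕ → ℤ) (n : ℕ) :
    X.law x (prefixCylinder u (n + 1)) = X.law x (prefixCylinder u n) * X.step (u n) (u (n + 1)) :=
  X.markov x u n

theorem law_prefixCylinder (x : ℤ) (u : ℕ → ℤ) (n : ℕ) :
    X.law x (prefixCylinder u n)
      = (if u 0 = x then 1 else 0) * ∏ j ∈ Finset.range n, X.step (u j) (u (j + 1)) := by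
  induction n with
  | zero => simp [law_prefixCylinder_zero]
  | succ n ih => rw [law_prefixCylinder_succ, ih, Finset.prod_range_succ, mul_assoc]

def concatPath (u : ℕ → ℤ) (n : ℕ) (v : ℕ → ℤ) : ℕ → ℤ :=
  fun i => if i ≤ n then u i else v (i - n)

theorem prefixCylinder_inter_preimage_shiftPath {u v : ℕ → ℤ} {n : ℕ} (m : ℕ) (h : v 0 = u n) :
    prefixCylinder u n ∩ shiftPath n ⁻¹' prefixCylinder v m
      = prefixCylinder (concatPath u n v) (n + m) := by
  ext ω
  simp only [prefixCylinder, Set.mem_inter_iff, Set.mem_preimage, Set.mem_ofPred_eq, shiftPath,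
    concatPath]
  constructor
  · rintro ⟨hu, hv⟩ i hi
    split_ifs with hin
    · exact hu i hin
    · simpa [Nat.add_sub_cancel' (Nat.le_of_not_le hin)] using hv (i - n) (by omega)
  · intro hω
    refine ⟨fun i hi => by simpa [hi] using hω i (by omega), fun j hj => ?_⟩
    rcases Nat.eq_zero_or_pos j with rfl | hj0
    · simpa [h] using hω n (by omega)
    · simpa [show ¬ n + j ≤ n by omega] using hω (n + j) (by omega)

theorem law_prefixCylinder_concatPath (x : ℤ) {u v : ℕ → ℤ} {n : ℕ} (h : v 0 = u n) (m : ℕ) :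
    X.law x (prefixCylinder (concatPath u n v) (n + m))
      = X.law x (prefixCylinder u n) * X.law (u n) (prefixCylinder v m) := by
  induction m with
  | zero =>
    have : prefixCylinder (concatPath u n v) n = prefixCylinder u n := by
      ext ω; simp +contextual [prefixCylinder, concatPath]
    rw [Nat.add_zero, this, law_prefixCylinder_zero, if_pos h, mul_one]
  | succ m ih =>
    have hc : ∀ k, concatPath u n v (n + k) = v k := fun k => by
      rcases Nat.eq_zero_or_pos k with rfl | hk
      · simp [concatPath, h]
      · simp [concatPath, show ¬ n + k ≤ n by omega]
    rw [← Nat.add_assoc, law_prefixCylinder_succ, ih, law_prefixCylinder_succ, hc, Nat.add_assoc,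
      hc, mul_assoc]

theorem law_prefixCylinder_inter_preimage_shiftPath (x : ℤ) (u : ℕ → ℤ) (n : ℕ)
    {F : Set (ℕ → ℤ)} (hF : MeasurableSet F) :
    X.law x (prefixCylinder u n ∩ shiftPath n ⁻¹' F)
      = X.law x (prefixCylinder u n) * X.law (u n) F := by
  let μ := (X.law x).restrict (prefixCylinder u n)
  suffices μ.map (shiftPath n) = X.law x (prefixCylinder u n) • X.law (u n) by
    rw [Set.inter_comm, ← Measure.restrict_apply (measurable_shiftPath n hF),
      ← Measure.map_apply (measurable_shiftPath n) hF, this, Measure.smul_apply, smul_eq_mul]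
  refine ext_of_generate_finite _ generateFrom_prefixCylinders.symm isPiSystem_prefixCylinders
    ?_ (by simp [μ, Measure.map_apply (measurable_shiftPath n)])
  rintro _ ⟨v, m, rfl⟩
  rw [Measure.map_apply (measurable_shiftPath n) (measurableSet_prefixCylinder v m),
    Measure.restrict_apply (measurable_shiftPath n (measurableSet_prefixCylinder v m)),
    Set.inter_comm, Measure.smul_apply, smul_eq_mul]
  by_cases hv : v 0 = u n
  · rw [prefixCylinder_inter_preimage_shiftPath m hv, law_prefixCylinder_concatPath X x hv]
  · have hempty : prefixCylinder u n ∩ shiftPath n ⁻¹' prefixCylinder v m = ∅ :=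
      Set.eq_empty_of_forall_notMem fun ω ⟨hu, hv'⟩ =>
        hv ((hv' 0 (Nat.zero_le m)).symm.trans (by simpa [shiftPath] using hu n le_rfl))
    rw [hempty, law_prefixCylinder X (u n) v m, if_neg hv]
    simp

theorem law_inter_preimage_shiftPath (x z : ℤ) {n : ℕ} {E F : Set (ℕ → ℤ)}
    (hE : IsDeterminedUpTo n E) (hz : ∀ ω ∈ E, ω n = z) (hF : MeasurableSet F) :
    X.law x (E ∩ shiftPath n ⁻¹' F) = X.law x E * X.law z F := by
  have hrep := countable_prefixRepresentatives n E
  have hdisj := pairwiseDisjoint_prefixRepresentatives n E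
  rw [hE.eq_biUnion, Set.iUnion₂_inter,
    measure_biUnion hrep (hdisj.mono fun _ => Set.inter_subset_left)
      fun v _ => (measurableSet_prefixCylinder v n).inter (measurable_shiftPath n hF),
    measure_biUnion hrep hdisj fun v _ => measurableSet_prefixCylinder v n,
    ← ENNReal.tsum_mul_right]
  refine tsum_congr fun v => ?_
  rw [law_prefixCylinder_inter_preimage_shiftPath X x v n hF, hz v v.2.1]

theorem setLIntegral_comp_shiftPath (x z : ℤ) {n : ℕ} {E : Set (ℕ → ℤ)}
    (hE : IsDeterminedUpTo n E) (hz : ∀ ω ∈ E, ω n = z) {f : (ℕ → ℤ) → ℝ≥0∞}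
    (hf : Measurable f) :
    ∫⁻ ω in E, f (shiftPath n ω) ∂X.law x = X.law x E * ∫⁻ ω, f ω ∂X.law z := by
  have hmap : ((X.law x).restrict E).map (shiftPath n) = X.law x E • X.law z := by
    ext G hG
    rw [Measure.map_apply (measurable_shiftPath n) hG,
      Measure.restrict_apply (measurable_shiftPath n hG), Set.inter_comm,
      X.law_inter_preimage_shiftPath x z hE hz hG, Measure.smul_apply, smul_eq_mul]
  rw [← lintegral_map hf (measurable_shiftPath n), hmap, lintegral_smul_measure, smul_eq_mul]

/-- `ℙₓ(X_{T_A} = z)`. -/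
def exitProb (x : ℤ) (A : Set ℤ) (z : ℤ) : ℝ≥0∞ := ∑' n : ℕ, X.law x (firstEntry A n z)

theorem exitProb_eq_zero_of_notMem (x : ℤ) {A : Set ℤ} {z : ℤ} (hz : z ∉ A) :
    X.exitProb x A z = 0 := by
  have hempty n : firstEntry A n z = ∅ :=
    Set.eq_empty_of_forall_notMem fun ω ⟨hωz, hωA, _⟩ => hz (hωz ▸ hωA)
  simp [exitProb, hempty]

theorem tsum_exitProb (x : ℤ) (A : Set ℤ) :
    ∑' z, X.exitProb x A z = X.law x (neverHits A)ᶜ := by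
  rw [← iUnion_firstEntry, measure_iUnion (pairwise_disjoint_firstEntry A)
    fun p => measurableSet_firstEntry A p.1 p.2,
    ENNReal.tsum_prod (f := fun n z => X.law x (firstEntry A n z)), ENNReal.tsum_comm]
  rfl

theorem exitProb_le_one (x : ℤ) (A : Set ℤ) (z : ℤ) : X.exitProb x A z ≤ 1 :=
  (ENNReal.le_tsum z).trans ((X.tsum_exitProb x A).trans_le prob_le_one)

theorem law_neverHits_eq_zero (x : ℤ) (A : Set ℤ) (h : X.eTset x A ≠ ⊤) :
    X.law x (neverHits A) = 0 := by
  refine measure_mono_null (fun ω hω => ?_)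
    (ae_iff.mp (ae_lt_top (measurable_hitTime (MeasurableSet.of_discrete)) h))
  simp [hitTime_eq_top hω]

theorem tsum_exitProb_eq_one (x : ℤ) (A : Set ℤ) (h : X.eTset x A ≠ ⊤) :
    ∑' z, X.exitProb x A z = 1 := by
  rw [tsum_exitProb, prob_compl_eq_one_sub (measurableSet_neverHits A),
    X.law_neverHits_eq_zero x A h, tsub_zero]

/-- Strong Markov property at the first visit to `A`, in the form `T_y ≤ T_A + T_y ∘ θ_{T_A}`. -/
theorem eT_le_eTset_add_tsum_exitProb_mul (x y : ℤ) (A : Set ℤ) :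
    X.eT x y ≤ X.eTset x A + ∑' z, X.exitProb x A z * X.eT z y := by
  have hTA : Measurable (hitTime A) := measurable_hitTime MeasurableSet.of_discrete
  have hTy : Measurable (hitTime {y}) := measurable_hitTime (measurableSet_singleton y)
  have hentry (p : ℕ × ℤ) : ∫⁻ ω in firstEntry A p.1 p.2, hitTime {y} ω ∂X.law x
      ≤ ∫⁻ ω in firstEntry A p.1 p.2, hitTime A ω ∂X.law x
        + X.law x (firstEntry A p.1 p.2) * X.eT p.2 y := by
    rw [BDChain.eT, ← X.setLIntegral_comp_shiftPath x p.2 (isDeterminedUpTo_firstEntry A p.1 p.2)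
      (fun ω hω => hω.1) hTy, ← lintegral_add_left hTA]
    refine setLIntegral_mono' (measurableSet_firstEntry A p.1 p.2) fun ω hω => ?_
    rw [hitTime_eq_of_mem_firstEntry hω]
    exact hitTime_le_add_hitTime_shiftPath {y} p.1 ω
  have hnever : ∫⁻ ω in neverHits A, hitTime {y} ω ∂X.law x
      ≤ ∫⁻ ω in neverHits A, hitTime A ω ∂X.law x :=
    setLIntegral_mono' (measurableSet_neverHits A) fun ω hω => by simp [hitTime_eq_top hω]
  have hexit : ∑' p : ℕ × ℤ, X.law x (firstEntry A p.1 p.2) * X.eT p.2 y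
      = ∑' z, X.exitProb x A z * X.eT z y := by
    rw [ENNReal.tsum_prod (f := fun n z => X.law x (firstEntry A n z) * X.eT z y),
      ENNReal.tsum_comm]
    simp only [exitProb, ENNReal.tsum_mul_right]
  calc X.eT x y
      = ∑' p : ℕ × ℤ, ∫⁻ ω in firstEntry A p.1 p.2, hitTime {y} ω ∂X.law x
          + ∫⁻ ω in neverHits A, hitTime {y} ω ∂X.law x :=
        lintegral_eq_tsum_firstEntry_add _ A _
    _ ≤ ∑' p : ℕ × ℤ, (∫⁻ ω in firstEntry A p.1 p.2, hitTime A ω ∂X.law x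
          + X.law x (firstEntry A p.1 p.2) * X.eT p.2 y)
          + ∫⁻ ω in neverHits A, hitTime A ω ∂X.law x :=
        add_le_add (ENNReal.tsum_le_tsum hentry) hnever
    _ = X.eTset x A + ∑' z, X.exitProb x A z * X.eT z y := by
        rw [ENNReal.tsum_add, hexit, add_right_comm, BDChain.eTset,
          lintegral_eq_tsum_firstEntry_add (X.law x) A (hitTime A)]

theorem eT_self (z : ℤ) : X.eT z z = 0 := by
  rw [BDChain.eT, lintegral_eq_zero_iff (measurable_hitTime (measurableSet_singleton z))]
  filter_upwards [X.ae_init z] with ω h0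
  simpa using hitTime_le_of_mem (A := {z}) (t := 0) h0

theorem eT_le_eT_add_eT (x w y : ℤ) : X.eT x y ≤ X.eT x w + X.eT w y := by
  have h := X.eT_le_eTset_add_tsum_exitProb_mul x y {w}
  rw [tsum_eq_single w fun z hz => by
    rw [X.exitProb_eq_zero_of_notMem x (by simpa using hz), zero_mul]] at h
  exact h.trans (add_le_add le_rfl (mul_le_of_le_one_left' (X.exitProb_le_one x {w} w)))

theorem eT_le_eTset_pair_add {y z : ℤ} (x : ℤ) (hyz : y ≠ z) :
    X.eT x y ≤ X.eTset x {y, z} + X.exitProb x {y, z} z * X.eT z y := by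
  have h := X.eT_le_eTset_add_tsum_exitProb_mul x y {y, z}
  rwa [tsum_eq_sum (s := {y, z}) fun w hw => by
      rw [X.exitProb_eq_zero_of_notMem x (by simpa using hw), zero_mul],
    Finset.sum_pair hyz, eT_self, mul_zero, zero_add] at h

theorem exitProb_add_exitProb {y z : ℤ} (x : ℤ) (hyz : y ≠ z) (h : X.eTset x {y, z} ≠ ⊤) :
    X.exitProb x {y, z} y + X.exitProb x {y, z} z = 1 := by
  rw [← Finset.sum_pair hyz, ← X.tsum_exitProb_eq_one x {y, z} h,
    tsum_eq_sum (s := {y, z}) fun w hw => X.exitProb_eq_zero_of_notMem x (by simpa using hw)]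

theorem p_nonneg (j : ℤ) : 0 ≤ X.p j := by
  by_cases h : b ≤ j ∧ j ≤ a - 1
  · exact (X.p_pos j h.1 h.2).le
  · rw [X.p_zero j (by omega)]

theorem q_nonneg (j : ℤ) : 0 ≤ X.q j := by
  by_cases h : b + 1 ≤ j ∧ j ≤ a
  · exact (X.q_pos j h.1 h.2).le
  · rw [X.q_zero j (by omega)]

theorem p_le_one {j : ℤ} (hbj : b ≤ j) (hja : j ≤ a) : X.p j ≤ 1 := by
  linarith [X.r_nonneg j hbj hja, X.q_nonneg j]

theorem q_le_one {j : ℤ} (hbj : b ≤ j) (hja : j ≤ a) : X.q j ≤ 1 := by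
  linarith [X.r_nonneg j hbj hja, X.p_nonneg j]

theorem mem_Icc_of_bdStep_pos {s t : ℤ} (h : 0 < bdStep X.p X.q s t) (hs : s ∈ Set.Icc b a) :
    t ∈ Set.Icc b a := by
  obtain ⟨hbs, hsa⟩ := hs
  unfold bdStep at h
  split_ifs at h with h1 h2 h3
  · have : s < a := by
      by_contra hc
      rw [X.p_zero s (.inr (by omega))] at h
      exact h.false
    constructor <;> omega
  · have : b < s := by
      by_contra hc
      rw [X.q_zero s (.inl (by omega))] at h
      exact h.false
    constructor <;> omega
  · exact h3 ▸ ⟨hbs, hsa⟩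
  · exact absurd h (lt_irrefl 0)

theorem ae_bdStep_pos (x : ℤ) :
    ∀ᵐ ω ∂X.law x, ∀ n, 0 < bdStep X.p X.q (ω n) (ω (n + 1)) := by
  refine ae_all_iff.mpr fun n => ?_
  let E := {ω : ℕ → ℤ | ¬ 0 < bdStep X.p X.q (ω n) (ω (n + 1))}
  have hE : IsDeterminedUpTo (n + 1) E := fun ω ω' h => by
    simp [E, h n (by omega), h (n + 1) le_rfl]
  change X.law x E = 0
  rw [hE.eq_biUnion, measure_biUnion_null_iff (countable_prefixRepresentatives _ _)]
  intro v hv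
  rw [law_prefixCylinder_succ, step, ENNReal.ofReal_eq_zero.mpr (not_lt.mp hv.1), mul_zero]

theorem ae_mem_Icc {x : ℤ} (hx : x ∈ Set.Icc b a) : ∀ᵐ ω ∂X.law x, ∀ n, ω n ∈ Set.Icc b a := by
  filter_upwards [X.ae_init x, X.ae_bdStep_pos x] with ω h0 hstep n
  induction n with
  | zero => exact h0 ▸ hx
  | succ n ih => exact X.mem_Icc_of_bdStep_pos (hstep n) ih

/-- A lower bound, uniform in the start and the target in `⟦b,a⟧`, for the probability of
going straight to the target. -/
def reachBound : ℝ≥0∞ :=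
  (∏ j ∈ Finset.Ico b a, ENNReal.ofReal (X.p j)) * ∏ j ∈ Finset.Ioc b a, ENNReal.ofReal (X.q j)

theorem reachBound_pos : 0 < X.reachBound := by
  refine ENNReal.mul_pos ?_ ?_ <;> refine (CanonicallyOrderedAdd.prod_pos.mpr fun j hj => ?_).ne'
  · rw [Finset.mem_Ico] at hj
    exact ENNReal.ofReal_pos.mpr (X.p_pos j hj.1 (by omega))
  · rw [Finset.mem_Ioc] at hj
    exact ENNReal.ofReal_pos.mpr (X.q_pos j (by omega) hj.2)

theorem reachBound_le_law_ascent {z y : ℤ} (hbz : b ≤ z) (hzy : z ≤ y) (hya : y ≤ a) :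
    X.reachBound ≤ X.law z (prefixCylinder (fun i => min (z + i) y) (y - z).toNat) := by
  have hstep : ∀ j ∈ Finset.range (y - z).toNat,
      X.step (min (z + j) y) (min (z + (j + 1 : ℕ)) y) = ENNReal.ofReal (X.p (z + j)) := by
    intro j hj
    rw [Finset.mem_range] at hj
    rw [min_eq_left (by omega), min_eq_left (by omega), step, bdStep, if_pos (by push_cast; ring)]
  rw [law_prefixCylinder, if_pos (by simpa using hzy), one_mul, Finset.prod_congr rfl hstep,
    Finset.prod_range_eq_prod_Ico_int (fun k => ENNReal.ofReal (X.p k)),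
    Int.toNat_of_nonneg (by omega), add_sub_cancel]
  refine (mul_le_of_le_one_right' (Finset.prod_le_one' fun j hj => ?_)).trans
    (Finset.prod_le_prod_of_subset_of_le_one' (Finset.Ico_subset_Ico hbz hya) fun j hj _ => ?_)
  · rw [Finset.mem_Ioc] at hj
    exact ENNReal.ofReal_le_one.mpr (X.q_le_one (by omega) hj.2)
  · rw [Finset.mem_Ico] at hj
    exact ENNReal.ofReal_le_one.mpr (X.p_le_one hj.1 (by omega))

theorem reachBound_le_law_descent {z y : ℤ} (hby : b ≤ y) (hyz : y ≤ z) (hza : z ≤ a) :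
    X.reachBound ≤ X.law z (prefixCylinder (fun i => max (z - i) y) (z - y).toNat) := by
  have hstep : ∀ j ∈ Finset.range (z - y).toNat,
      X.step (max (z - j) y) (max (z - (j + 1 : ℕ)) y) = ENNReal.ofReal (X.q (z - j)) := by
    intro j hj
    rw [Finset.mem_range] at hj
    rw [max_eq_left (by omega), max_eq_left (by omega), step, bdStep, if_neg (by omega),
      if_pos (by push_cast; ring)]
  rw [law_prefixCylinder, if_pos (by simpa using hyz), one_mul, Finset.prod_congr rfl hstep,
    Finset.prod_range_eq_prod_Ioc_int (fun k => ENNReal.ofReal (X.q k)),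
    Int.toNat_of_nonneg (by omega), show z - (z - y) = y by omega]
  refine (mul_le_of_le_one_left' (Finset.prod_le_one' fun j hj => ?_)).trans
    (Finset.prod_le_prod_of_subset_of_le_one' (Finset.Ioc_subset_Ioc hby hza) fun j hj _ => ?_)
  · rw [Finset.mem_Ico] at hj
    exact ENNReal.ofReal_le_one.mpr (X.p_le_one hj.1 (by omega))
  · rw [Finset.mem_Ioc] at hj
    exact ENNReal.ofReal_le_one.mpr (X.q_le_one (by omega) hj.2)

theorem law_avoidsUpTo_le_one_sub_reachBound {z y : ℤ} (hz : z ∈ Set.Icc b a)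
    (hy : y ∈ Set.Icc b a) {N : ℕ} (hN : (a - b).toNat ≤ N) :
    X.law z (avoidsUpTo {y} N) ≤ 1 - X.reachBound := by
  obtain ⟨u, m, hm, hum, hreach⟩ : ∃ u m, m ≤ N ∧ u m = y ∧
      X.reachBound ≤ X.law z (prefixCylinder u m) := by
    obtain ⟨⟨hbz, hza⟩, ⟨hby, hya⟩⟩ := And.intro hz hy
    rcases le_total z y with hzy | hyz
    · exact ⟨_, _, by omega, by simp; omega, X.reachBound_le_law_ascent hbz hzy hya⟩
    · exact ⟨_, _, by omega, by simp; omega, X.reachBound_le_law_descent hby hyz hza⟩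
  have hhit : prefixCylinder u m ⊆ (avoidsUpTo {y} N)ᶜ :=
    fun ω hω hav => hav m hm (by rw [hω m le_rfl, hum]; rfl)
  rw [← compl_compl (avoidsUpTo {y} N), prob_compl_eq_one_sub (measurableSet_avoidsUpTo _ _).compl]
  exact tsub_le_tsub_left (hreach.trans (measure_mono hhit)) 1

theorem law_avoidsUpTo_add_le {x : ℤ} (hx : x ∈ Set.Icc b a) (A : Set ℤ) (n m : ℕ)
    {r : ℝ≥0∞} (hr : ∀ z ∈ Set.Icc b a, X.law z (avoidsUpTo A m) ≤ r) :
    X.law x (avoidsUpTo A (n + m)) ≤ X.law x (avoidsUpTo A n) * r := by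
  let E (z : ℤ) := avoidsUpTo A n ∩ {ω | ω n = z}
  have hsplit : avoidsUpTo A (n + m) ⊆ ⋃ z, E z ∩ shiftPath n ⁻¹' avoidsUpTo A m :=
    fun ω hω => Set.mem_iUnion.mpr
      ⟨ω n, ⟨avoidsUpTo_anti A (by omega) hω, rfl⟩, fun t ht => hω (n + t) (by omega)⟩
  have hE (z : ℤ) : IsDeterminedUpTo n (E z) := by
    intro ω ω' h
    simp only [E, avoidsUpTo, Set.mem_inter_iff, Set.mem_ofPred_eq, h n le_rfl]
    exact and_congr_left' (forall₂_congr fun t ht => by rw [h t ht])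
  have hterm (z : ℤ) : X.law x (E z ∩ shiftPath n ⁻¹' avoidsUpTo A m) ≤ X.law x (E z) * r := by
    rw [X.law_inter_preimage_shiftPath x z (hE z) (fun ω hω => hω.2)
      (measurableSet_avoidsUpTo A m)]
    by_cases hz : z ∈ Set.Icc b a
    · exact mul_le_mul_right (hr z hz) _
    · have hnull : X.law x (E z) = 0 := by
        refine measure_mono_null (fun ω hω => ?_) (ae_iff.mp (X.ae_mem_Icc hx))
        exact fun hall => hz (hω.2 ▸ hall n)
      simp [hnull]
  have hsum : ∑' z, X.law x (E z) = X.law x (avoidsUpTo A n) := by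
    rw [← measure_iUnion (fun z w hzw => Set.disjoint_left.mpr fun ω h1 h2 =>
        hzw (h1.2.symm.trans h2.2))
      fun z => (measurableSet_avoidsUpTo A n).inter (measurableSet_eval_eq n z)]
    congr 1
    ext ω
    simp
  calc X.law x (avoidsUpTo A (n + m))
      ≤ ∑' z, X.law x (E z ∩ shiftPath n ⁻¹' avoidsUpTo A m) :=
        (measure_mono hsplit).trans (measure_iUnion_le _)
    _ ≤ ∑' z, X.law x (E z) * r := ENNReal.tsum_le_tsum hterm
    _ = X.law x (avoidsUpTo A n) * r := by rw [ENNReal.tsum_mul_right, hsum]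

theorem law_avoidsUpTo_mul_le_pow {x y : ℤ} (hx : x ∈ Set.Icc b a) (hy : y ∈ Set.Icc b a)
    {N : ℕ} (hN : (a - b).toNat ≤ N) (k : ℕ) :
    X.law x (avoidsUpTo {y} (k * N)) ≤ (1 - X.reachBound) ^ k := by
  induction k with
  | zero => simpa using prob_le_one
  | succ k ih =>
    rw [Nat.succ_mul, pow_succ]
    exact (X.law_avoidsUpTo_add_le hx {y} _ _ fun z hz =>
      X.law_avoidsUpTo_le_one_sub_reachBound hz hy hN).trans (mul_le_mul_left ih _)

theorem eT_ne_top {x y : ℤ} (hx : x ∈ Set.Icc b a) (hy : y ∈ Set.Icc b a) : X.eT x y ≠ ⊤ := by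
  set N := (a - b).toNat + 1
  have hr : 1 - X.reachBound < 1 :=
    ENNReal.sub_lt_self ENNReal.one_ne_top one_ne_zero X.reachBound_pos.ne'
  have htail (j : ℕ) : X.law x (avoidsUpTo {y} j) ≤ (1 - X.reachBound) ^ (j / N) :=
    (measure_mono (avoidsUpTo_anti _ (Nat.div_mul_le_self j N))).trans
      (X.law_avoidsUpTo_mul_le_pow hx hy (Nat.le_succ _) (j / N))
  rw [BDChain.eT, lintegral_hitTime_eq_tsum]
  refine ne_top_of_le_ne_top ?_ (ENNReal.tsum_le_tsum htail)
  rw [ENNReal.tsum_pow_div _ (Nat.succ_pos _ : 0 < N)]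
  exact ENNReal.mul_ne_top (ENNReal.natCast_ne_top N)
    (ENNReal.inv_ne_top.mpr (tsub_pos_iff_lt.mpr hr).ne')

theorem eTset_le_eT (x : ℤ) {A : Set ℤ} {y : ℤ} (hy : y ∈ A) : X.eTset x A ≤ X.eT x y :=
  lintegral_mono fun ω => hitTime_anti (Set.singleton_subset_iff.mpr hy) ω

end BDChain

theorem exit_time_two_walls_bounds_general {b a : ℤ} (hb : b ≤ 0) (ha : 0 < a)
    (X : BDChain b a) :
    (1 - 2 * (X.eT a 0 / X.eT 0 a ⊔ X.eT b 0 / X.eT 0 b)) / 2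
        * (X.eT 0 a ⊓ X.eT 0 b) ≤ X.eTset 0 {a, b}
      ∧ X.eTset 0 {a, b} ≤ X.eT 0 a ⊓ X.eT 0 b := by
  have h0 : (0 : ℤ) ∈ Set.Icc b a := ⟨hb, ha.le⟩
  have ha' : a ∈ Set.Icc b a := ⟨by omega, le_rfl⟩
  have hb' : b ∈ Set.Icc b a := ⟨le_rfl, by omega⟩
  have hab : a ≠ b := by omega
  have hupper : X.eTset 0 {a, b} ≤ X.eT 0 a ⊓ X.eT 0 b :=
    le_inf (X.eTset_le_eT 0 (by simp)) (X.eTset_le_eT 0 (by simp))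
  have hμ : X.eTset 0 {a, b} ≠ ⊤ :=
    ne_top_of_le_ne_top (X.eT_ne_top h0 ha') (hupper.trans inf_le_left)
  have hα : X.eT 0 a ≤ X.eTset 0 {a, b} + X.exitProb 0 {a, b} b * (X.eT b 0 + X.eT 0 a) :=
    (X.eT_le_eTset_pair_add 0 hab).trans (by gcongr; exact X.eT_le_eT_add_eT b 0 a)
  have hβ : X.eT 0 b ≤ X.eTset 0 {a, b} + X.exitProb 0 {a, b} a * (X.eT a 0 + X.eT 0 b) := by
    rw [Set.pair_comm]
    exact (X.eT_le_eTset_pair_add 0 hab.symm).trans (by gcongr; exact X.eT_le_eT_add_eT a 0 b)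
  refine ⟨?_, hupper⟩
  exact ENNReal.one_sub_two_mul_div_two_mul_min_le (X.eT_ne_top h0 ha') (X.eT_ne_top h0 hb') hμ
    (X.exitProb_add_exitProb 0 hab hμ) le_sup_left le_sup_right hα hβ

/-- For an irreducible birth-and-death chain on `⟦b,a⟧`
(`b ≤ 0 < a`) with invariant measure `π`, set
`C = max(E[T_{a→0}]/E[T_{0→a}], E[T_{b→0}]/E[T_{0→b}])`. If `C ≤ 1` then
`((1-2C)/2) · min(E[T_{0→a}], E[T_{0→b}]) ≤ E[T_{0→{a,b}}] ≤ min(E[T_{0→a}], E[T_{0→b}])`. -/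
theorem exit_time_two_walls_bounds {b a : ℤ} (hb : b ≤ 0) (ha : 0 < a)
    (X : BDChain b a) (π : ℤ → ℝ) (hπ : X.IsStationary π)
    (hC : X.eT a 0 / X.eT 0 a ⊔ X.eT b 0 / X.eT 0 b ≤ 1) :
    (1 - 2 * (X.eT a 0 / X.eT 0 a ⊔ X.eT b 0 / X.eT 0 b)) / 2
        * (X.eT 0 a ⊓ X.eT 0 b) ≤ X.eTset 0 {a, b}
      ∧ X.eTset 0 {a, b} ≤ X.eT 0 a ⊓ X.eT 0 b :=
  exit_time_two_walls_bounds_general hb ha X
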